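/- Let L be a lattice with least element 0, a an atom and neutral element of L, and x ∈ L. If for all y, z ∈ L the equalities x ⊔ (y ⊔ a) = x ⊔ (z ⊔ a) and x ⊓ (y ⊔ a) = x ⊓ (z ⊔ a) imply y ⊔ a = z ⊔ a, then x is a cancellable element of L. -/

import Mathlib

/-!
A neutral element `a` is cancellable and distributes over joins, both as `a ⊓ (x ⊔ y)` and as
`x ⊓ (y ⊔ a)`; each fact comes from bounding an element by a suitable median
`a ⊓ y ⊔ y ⊓ z ⊔ z ⊓ a`. Given `x ⊔ y = x ⊔ z` and `x ⊓ y = x ⊓ z`, distributivity makes the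
meets of `x` with `y ⊔ a` and `z ⊔ a` agree, so the hypothesis yields `y ⊔ a = z ⊔ a`.
Since `a` is an atom, either `a ≤ x` or `a ⊓ x = ⊥`, and in both cases `a ⊓ y = a ⊓ z`.
Cancellation by `a` then gives `y = z`.
-/

def IsNeutral {L : Type*} [Lattice L] (a : L) : Prop :=
  ∀ y z : L, (a ⊔ y) ⊓ (y ⊔ z) ⊓ (z ⊔ a) = (a ⊓ y) ⊔ (y ⊓ z) ⊔ (z ⊓ a)

namespace IsNeutral

variable {L : Type*} [Lattice L] {a : L}

theorem le_median (ha : IsNeutral a) {w y z : L} (hay : w ≤ a ⊔ y) (hyz : w ≤ y ⊔ z)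
    (hza : w ≤ z ⊔ a) : w ≤ a ⊓ y ⊔ y ⊓ z ⊔ z ⊓ a :=
  ha y z ▸ le_inf (le_inf hay hyz) hza

theorem le_of_sup_eq_of_inf_eq (ha : IsNeutral a) {p q : L} (hsup : a ⊔ p = a ⊔ q)
    (hinf : a ⊓ p = a ⊓ q) : p ≤ q :=
  calc p ≤ a ⊓ p ⊔ p ⊓ q ⊔ q ⊓ a :=
        ha.le_median le_sup_right le_sup_left (sup_comm a q ▸ hsup ▸ le_sup_right)
    _ ≤ q := sup_le (sup_le (hinf ▸ inf_le_right) inf_le_right) inf_le_left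

theorem eq_of_sup_eq_of_inf_eq (ha : IsNeutral a) {p q : L} (hsup : a ⊔ p = a ⊔ q)
    (hinf : a ⊓ p = a ⊓ q) : p = q :=
  le_antisymm (ha.le_of_sup_eq_of_inf_eq hsup hinf)
    (ha.le_of_sup_eq_of_inf_eq hsup.symm hinf.symm)

theorem inf_sup_left (ha : IsNeutral a) (x y : L) : a ⊓ (x ⊔ y) = a ⊓ x ⊔ a ⊓ y := by
  refine le_antisymm ?_ (sup_le (inf_le_inf_left a le_sup_left) (inf_le_inf_left a le_sup_right))
  set s := a ⊓ x ⊔ a ⊓ y with hs_def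
  have hsa : s ≤ a := sup_le inf_le_left inf_le_left
  -- `a ⊓ (x ⊔ y)` lies below the median of `a, x, y`, which is `x ⊓ y ⊔ s`.
  have hw : a ⊓ (x ⊔ y) ≤ a ⊓ (x ⊓ y ⊔ s) := by
    refine le_inf inf_le_left ((ha.le_median (le_sup_left.trans' inf_le_left) inf_le_right
      (le_sup_right.trans' inf_le_left)).trans (le_of_eq (by rw [hs_def]; ac_rfl)))
  -- The median of `a, x ⊓ y, s` is `a ⊓ (x ⊓ y ⊔ s)` on one side and `s` on the other.
  have hs : a ⊓ (x ⊓ y ⊔ s) ≤ s := by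
    refine (ha.le_median (inf_le_left.trans le_sup_left) inf_le_right
      (inf_le_left.trans (sup_eq_right.mpr hsa).ge)).trans
      (sup_le (sup_le ?_ inf_le_right) inf_le_left)
    exact (inf_le_inf_left a inf_le_left).trans le_sup_left
  exact hw.trans hs

theorem inf_sup_neutral (ha : IsNeutral a) (x y : L) : x ⊓ (y ⊔ a) = x ⊓ y ⊔ x ⊓ a := by
  refine le_antisymm ?_ (sup_le (inf_le_inf_left x le_sup_left) (inf_le_inf_left x le_sup_right))
  set w := x ⊓ (y ⊔ a)
  set s := x ⊓ y ⊔ x ⊓ a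
  have hw : w ≤ a ⊓ y ⊔ y ⊓ x ⊔ x ⊓ a :=
    ha.le_median (inf_le_right.trans (sup_comm y a).le) (inf_le_left.trans le_sup_right)
      (inf_le_left.trans le_sup_left)
  -- Hence `w ≤ s ⊔ a`, and `w` lies below the median of `a, w, s`, which is at most `s`.
  have hwsa : w ≤ s ⊔ a := hw.trans <| sup_le
    (sup_le (inf_le_left.trans le_sup_right)
      ((inf_comm y x).le.trans (le_sup_left.trans le_sup_left)))
    (le_sup_right.trans le_sup_left)
  refine (ha.le_median le_sup_right le_sup_left hwsa).trans
    (sup_le (sup_le ?_ inf_le_right) inf_le_left)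
  exact (le_inf (inf_le_right.trans inf_le_left) inf_le_left).trans le_sup_right

theorem inf_eq_inf_of_isAtom [OrderBot L] (ha : IsNeutral a) (hatom : IsAtom a) {x y z : L}
    (hsup : x ⊔ y = x ⊔ z) (hinf : x ⊓ y = x ⊓ z) : a ⊓ y = a ⊓ z := by
  by_cases hax : a ≤ x
  · rw [← inf_eq_left.mpr hax, inf_assoc, inf_assoc, hinf]
  · have hdisj : a ⊓ x = ⊥ := disjoint_iff.mp (hatom.not_le_iff_disjoint.mp hax)
    have key : ∀ t, a ⊓ (x ⊔ t) = a ⊓ t := fun t => by rw [ha.inf_sup_left, hdisj, bot_sup_eq]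
    rw [← key y, ← key z, hsup]

end IsNeutral

/-- If joins/meets of `x` with elements of the form `y ⊔ a` (where `a` is a neutral atom)
determine `y ⊔ a`, then `x` is cancellable. -/
theorem cancellable_of_cancel_over_atom {L : Type*} [Lattice L] [OrderBot L] (a : L)
    (hatom : IsAtom a)
    (hneutral : ∀ y z : L,
      (a ⊔ y) ⊓ (y ⊔ z) ⊓ (z ⊔ a) = (a ⊓ y) ⊔ (y ⊓ z) ⊔ (z ⊓ a))
    (x : L)
    (h : ∀ y z : L, x ⊔ (y ⊔ a) = x ⊔ (z ⊔ a) → x ⊓ (y ⊔ a) = x ⊓ (z ⊔ a) →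
      y ⊔ a = z ⊔ a) :
    ∀ y z : L, x ⊔ y = x ⊔ z → x ⊓ y = x ⊓ z → y = z := by
  have ha : IsNeutral a := hneutral
  intro y z hsup hinf
  have hsup_a : x ⊔ (y ⊔ a) = x ⊔ (z ⊔ a) := by rw [← sup_assoc, ← sup_assoc, hsup]
  have hinf_a : x ⊓ (y ⊔ a) = x ⊓ (z ⊔ a) := by
    rw [ha.inf_sup_neutral, ha.inf_sup_neutral, hinf]
  refine ha.eq_of_sup_eq_of_inf_eq ?_ (ha.inf_eq_inf_of_isAtom hatom hsup hinf)
  simpa only [sup_comm a] using h y z hsup_a hinf_a
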